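/- arXiv:2012.06323 — 2 statements merged into one kernel-verified Lean document; each statement's English description precedes it below -/
import Mathlib

section
/- (Calderón transference, weak type.) Let (a_n)_{n≥1} be a sequence of complex numbers, let P and Q be non-constant polynomials with integer coefficients mapping the natural numbers into the natural numbers, and let C > 0. Assume that for all finitely supported functions φ, ψ : ℤ → ℂ, every λ > 0 and every integer J ≥ 2, λ · #{ j ∈ ℤ : 1 ≤ j ≤ J and sup_{N ≥ 1} |(1/N) ∑_{n=1}^{N} a_n φ(j + P(n)) ψ(j + Q(n))| > λ } ≤ C ‖φ‖_{ℓ²(ℤ)} ‖ψ‖_{ℓ²(ℤ)}. Then for any dynamical system (X, 𝒜, μ, T) and any f, g ∈ L²(X, μ), sup_{λ > 0} ( λ · μ{ x ∈ X : sup_{N ≥ 1} |(1/N) ∑_{n=1}^{N} a_n f(T^{P(n)} x) g(T^{Q(n)} x)| > λ } ) ≤ C ‖f‖_{L²(μ)} ‖g‖_{L²(μ)}. -/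
open MeasureTheory Filter Finset
open scoped ENNReal NNReal

/-- The `ℓ²(ℤ)` norm (valued in `ℝ≥0∞`) of a function `φ : ℤ → ℂ`. -/
noncomputable def l2NormZ (φ : ℤ → ℂ) : ℝ≥0∞ :=
  (∑' j : ℤ, (‖φ j‖₊ : ℝ≥0∞) ^ (2 : ℝ)) ^ ((1 : ℝ) / 2)

/-!
Calderón's transference argument. Fix a bound `N₀` on the length of the averages and let `R`
bound the shifts `P n, Q n` for `n ≤ N₀`. For each `x`, the values of `f` and `g` along the orbit
segment `T x, …, T^(J+R) x` form finitely supported functions on `ℤ`, and the ergodic average of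
length `N ≤ N₀` at `T^k x` (`1 ≤ k ≤ J`) is the average on `ℤ` of these windows at `k`. The
hypothesis on `ℤ` therefore bounds the number of `k ≤ J` with `T^k x` in the level set `E`.
Integrating in `x`, invariance of `μ` and Cauchy–Schwarz give
`J λ μ(E) ≤ C (J + R) ‖f‖₂ ‖g‖₂`; letting `J → ∞` and then `N₀ → ∞` proves the weak type bound.
-/

open Topology

theorem ENNReal.le_of_eventually_natCast_mul_le_add_mul {L K : ℝ≥0∞} (R : ℕ)
    (h : ∀ᶠ J : ℕ in atTop, (J : ℝ≥0∞) * L ≤ (J + R) * K) : L ≤ K := by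
  rcases eq_or_ne K ⊤ with rfl | hK
  · exact le_top
  have hRK : (R : ℝ≥0∞) * K ≠ ⊤ := ENNReal.mul_ne_top (ENNReal.natCast_ne_top R) hK
  have hlim : Tendsto (fun J : ℕ => K + R * K * (J : ℝ≥0∞)⁻¹) atTop (𝓝 K) := by
    simpa using tendsto_const_nhds.add
      (ENNReal.Tendsto.const_mul ENNReal.tendsto_inv_nat_nhds_zero (Or.inr hRK))
  refine ge_of_tendsto hlim ?_
  filter_upwards [h, eventually_gt_atTop 0] with J hJ hJpos
  have hJ0 : (J : ℝ≥0∞) ≠ 0 := by exact_mod_cast hJpos.ne'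
  calc L = (J : ℝ≥0∞)⁻¹ * (J * L) := by
        rw [← mul_assoc, ENNReal.inv_mul_cancel hJ0 (ENNReal.natCast_ne_top J), one_mul]
    _ ≤ (J : ℝ≥0∞)⁻¹ * ((J + R) * K) := by gcongr
    _ = K + R * K * (J : ℝ≥0∞)⁻¹ := by
        rw [add_mul, mul_add, ← mul_assoc, ENNReal.inv_mul_cancel hJ0 (ENNReal.natCast_ne_top J),
          one_mul, mul_comm]

noncomputable section

variable {X : Type*}

def orbitAvg (a : ℕ → ℂ) (p q : ℕ → ℤ) (T : X → X) (f g : X → ℂ) (N : ℕ) (x : X) : ℂ :=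
  (1 / (N : ℂ)) * ∑ n ∈ Icc 1 N, a n * f (T^[(p n).toNat] x) * g (T^[(q n).toNat] x)

def shiftAvg (a : ℕ → ℂ) (p q : ℕ → ℤ) (φ ψ : ℤ → ℂ) (N : ℕ) (j : ℤ) : ℂ :=
  (1 / (N : ℂ)) * ∑ n ∈ Icc 1 N, a n * φ (j + p n) * ψ (j + q n)

def maximalAvg {α : Type*} (A : ℕ → α → ℂ) (y : α) : ℝ≥0∞ :=
  ⨆ N : ℕ, ⨆ _ : 1 ≤ N, (‖A N y‖₊ : ℝ≥0∞)

theorem setOf_lt_maximalAvg {α : Type*} (A : ℕ → α → ℂ) (t : ℝ≥0∞) :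
    {y | t < maximalAvg A y} = ⋃ N, {y | 1 ≤ N ∧ t < ‖A N y‖₊} := by
  ext y
  simp [maximalAvg, lt_iSup_iff]

def orbitLevelSet (a : ℕ → ℂ) (p q : ℕ → ℤ) (T : X → X) (f g : X → ℂ) (t : ℝ≥0∞) (N : ℕ) :
    Set X :=
  {x | 1 ≤ N ∧ t < ‖orbitAvg a p q T f g N x‖₊}

def orbitWindow (T : X → X) (f : X → ℂ) (M : ℕ) (x : X) (j : ℤ) : ℂ :=
  if j ∈ Icc (1 : ℤ) M then f (T^[j.toNat] x) else 0

theorem support_orbitWindow_finite (T : X → X) (f : X → ℂ) (M : ℕ) (x : X) :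
    (Function.support (orbitWindow T f M x)).Finite := by
  refine (Icc (1 : ℤ) M).finite_toSet.subset fun j hj => ?_
  by_contra hjM
  exact hj (if_neg hjM)

theorem orbitWindow_add {T : X → X} {f : X → ℂ} {M k : ℕ} {m : ℤ} (x : X) (hk : 1 ≤ k)
    (hm : 0 ≤ m) (hkm : k + m.toNat ≤ M) :
    orbitWindow T f M x (k + m) = f (T^[m.toNat] (T^[k] x)) := by
  have hmem : (k : ℤ) + m ∈ Icc (1 : ℤ) M := Finset.mem_Icc.2 ⟨by omega, by omega⟩
  rw [orbitWindow, if_pos hmem, ← Function.iterate_add_apply]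
  congr 2
  omega

theorem l2NormZ_orbitWindow (T : X → X) (f : X → ℂ) (M : ℕ) (x : X) :
    l2NormZ (orbitWindow T f M x) =
      (∑ j ∈ Icc (1 : ℤ) M, ‖f (T^[j.toNat] x)‖ₑ ^ (2 : ℝ)) ^ ((1 : ℝ) / 2) := by
  rw [l2NormZ, tsum_eq_sum (s := Icc (1 : ℤ) M) fun j hj => by rw [orbitWindow, if_neg hj]; simp]
  congr 1
  exact Finset.sum_congr rfl fun j hj => by rw [orbitWindow, if_pos hj, enorm_eq_nnnorm]

theorem orbitAvg_iterate_eq_shiftAvg_orbitWindow {T : X → X} {a : ℕ → ℂ} {p q : ℕ → ℤ}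
    (hp : ∀ n, 0 ≤ p n) (hq : ∀ n, 0 ≤ q n) {f g : X → ℂ} {M N k : ℕ} (x : X) (hk : 1 ≤ k)
    (hpM : ∀ n ∈ Icc 1 N, k + (p n).toNat ≤ M) (hqM : ∀ n ∈ Icc 1 N, k + (q n).toNat ≤ M) :
    orbitAvg a p q T f g N (T^[k] x) =
      shiftAvg a p q (orbitWindow T f M x) (orbitWindow T g M x) N k := by
  unfold orbitAvg shiftAvg
  congr 1
  refine Finset.sum_congr rfl fun n hn => ?_
  rw [orbitWindow_add x hk (hp n) (hpM n hn), orbitWindow_add x hk (hq n) (hqM n hn)]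

open Classical in
theorem card_filter_iterate_mem_le_ncard {T : X → X} {a : ℕ → ℂ} {p q : ℕ → ℤ}
    (hp : ∀ n, 0 ≤ p n) (hq : ∀ n, 0 ≤ q n) {f g : X → ℂ} {t : ℝ≥0∞} {N₀ R : ℕ}
    (hR : ∀ n ∈ Icc 1 N₀, (p n).toNat ≤ R ∧ (q n).toNat ≤ R) (J : ℕ) (x : X) :
    #{k ∈ Icc 1 J | T^[k] x ∈ Set.accumulate (orbitLevelSet a p q T f g t) N₀} ≤
      {j : ℤ | 1 ≤ j ∧ j ≤ J ∧ t < maximalAvg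
        (shiftAvg a p q (orbitWindow T f (J + R) x) (orbitWindow T g (J + R) x)) j}.ncard := by
  rw [← Finset.card_image_of_injective _ (Nat.cast_injective (R := ℤ)), ← Set.ncard_coe_finset]
  refine Set.ncard_le_ncard ?_ ((Set.finite_Icc (1 : ℤ) J).subset fun j hj => ⟨hj.1, hj.2.1⟩)
  intro j hj
  simp only [coe_image, coe_filter, Finset.mem_Icc, Set.mem_image, Set.mem_ofPred_eq] at hj
  obtain ⟨k, ⟨⟨hk1, hkJ⟩, hkE⟩, rfl⟩ := hj
  obtain ⟨N, hNN₀, hN1, hlt⟩ := Set.mem_accumulate.1 hkE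
  have hsub : Icc 1 N ⊆ Icc 1 N₀ := Finset.Icc_subset_Icc le_rfl hNN₀
  refine ⟨by exact_mod_cast hk1, by exact_mod_cast hkJ, hlt.trans_le ?_⟩
  rw [orbitAvg_iterate_eq_shiftAvg_orbitWindow (M := J + R) hp hq x hk1
    (fun n hn => by have := (hR n (hsub hn)).1; omega)
    (fun n hn => by have := (hR n (hsub hn)).2; omega)]
  exact le_iSup₂_of_le (f := fun N (_ : 1 ≤ N) => (‖shiftAvg a p q _ _ N k‖₊ : ℝ≥0∞)) N hN1 le_rfl

variable [MeasurableSpace X] {μ : Measure X} {T : X → X}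

theorem aemeasurable_l2NormZ_orbitWindow (hT : MeasurePreserving T μ μ) {f : X → ℂ}
    (hf : AEStronglyMeasurable f μ) (M : ℕ) :
    AEMeasurable (fun x => l2NormZ (orbitWindow T f M x)) μ := by
  simp_rw [l2NormZ_orbitWindow]
  exact (Finset.aemeasurable_fun_sum _ fun j _ =>
    (hf.comp_measurePreserving (hT.iterate j.toNat)).enorm.pow_const _).pow_const _

theorem lintegral_l2NormZ_orbitWindow_rpow_two (hT : MeasurePreserving T μ μ) {f : X → ℂ}
    (hf : AEStronglyMeasurable f μ) (M : ℕ) :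
    ∫⁻ x, l2NormZ (orbitWindow T f M x) ^ (2 : ℝ) ∂μ = M * eLpNorm f 2 μ ^ (2 : ℝ) := by
  have hiter (j : ℤ) : ∫⁻ x, ‖f (T^[j.toNat] x)‖ₑ ^ (2 : ℝ) ∂μ = eLpNorm f 2 μ ^ (2 : ℝ) := by
    have h := eLpNorm_nnreal_pow_eq_lintegral (f := f ∘ T^[j.toNat]) (μ := μ) (p := 2) two_ne_zero
    rw [eLpNorm_comp_measurePreserving hf (hT.iterate _)] at h
    simpa using h.symm
  simp_rw [l2NormZ_orbitWindow, ← ENNReal.rpow_mul,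
    one_div_mul_cancel (two_ne_zero : (2 : ℝ) ≠ 0), ENNReal.rpow_one]
  rw [lintegral_finsetSum' _ fun j _ =>
    ((hf.comp_measurePreserving (hT.iterate j.toNat)).enorm.pow_const _),
    Finset.sum_congr rfl fun j _ => hiter j, sum_const, Int.card_Icc, nsmul_eq_mul]
  simp

theorem lintegral_l2NormZ_orbitWindow_mul_le (hT : MeasurePreserving T μ μ) {f g : X → ℂ}
    (hf : AEStronglyMeasurable f μ) (hg : AEStronglyMeasurable g μ) (M : ℕ) :
    ∫⁻ x, l2NormZ (orbitWindow T f M x) * l2NormZ (orbitWindow T g M x) ∂μ ≤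
      M * eLpNorm f 2 μ * eLpNorm g 2 μ := by
  have hhalf : (0 : ℝ) ≤ 1 / 2 := by norm_num
  calc _ ≤ (M * eLpNorm f 2 μ ^ (2 : ℝ)) ^ ((1 : ℝ) / 2) *
          (M * eLpNorm g 2 μ ^ (2 : ℝ)) ^ ((1 : ℝ) / 2) := by
        rw [← lintegral_l2NormZ_orbitWindow_rpow_two hT hf,
          ← lintegral_l2NormZ_orbitWindow_rpow_two hT hg]
        exact ENNReal.lintegral_mul_le_Lp_mul_Lq μ Real.HolderConjugate.two_two
          (aemeasurable_l2NormZ_orbitWindow hT hf M) (aemeasurable_l2NormZ_orbitWindow hT hg M)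
    _ = ((M * eLpNorm f 2 μ * eLpNorm g 2 μ) ^ (2 : ℝ)) ^ ((1 : ℝ) / 2) := by
        rw [← ENNReal.mul_rpow_of_nonneg _ _ hhalf]
        simp only [ENNReal.rpow_two]
        ring_nf
    _ = M * eLpNorm f 2 μ * eLpNorm g 2 μ := by
        rw [← ENNReal.rpow_mul, mul_one_div_cancel two_ne_zero, ENNReal.rpow_one]

open Classical in
theorem lintegral_card_filter_iterate_mem (hT : MeasurePreserving T μ μ) {E : Set X}
    (hE : NullMeasurableSet E μ) (s : Finset ℕ) :
    ∫⁻ x, (#{k ∈ s | T^[k] x ∈ E} : ℝ≥0∞) ∂μ = #s * μ E := by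
  have hpre (k : ℕ) : NullMeasurableSet (T^[k] ⁻¹' E) μ :=
    hE.preimage (hT.iterate k).quasiMeasurePreserving
  have hind (x : X) (k : ℕ) :
      (if T^[k] x ∈ E then (1 : ℝ≥0∞) else 0) = (T^[k] ⁻¹' E).indicator 1 x := by
    simp [Set.indicator_apply]
  simp_rw [Finset.card_filter, Nat.cast_sum, Nat.cast_ite, Nat.cast_one, Nat.cast_zero, hind]
  rw [lintegral_finsetSum' _ fun k _ => measurable_one.aemeasurable.indicator₀ (hpre k)]
  simp_rw [lintegral_indicator_one₀ (hpre _), (hT.iterate _).measure_preimage hE, sum_const,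
    nsmul_eq_mul]

theorem aestronglyMeasurable_orbitAvg (hT : MeasurePreserving T μ μ) (a : ℕ → ℂ) (p q : ℕ → ℤ)
    {f g : X → ℂ} (hf : AEStronglyMeasurable f μ) (hg : AEStronglyMeasurable g μ) (N : ℕ) :
    AEStronglyMeasurable (orbitAvg a p q T f g N) μ :=
  aestronglyMeasurable_const.mul (Finset.aestronglyMeasurable_fun_sum _ fun _ _ =>
    (aestronglyMeasurable_const.mul (hf.comp_measurePreserving (hT.iterate _))).mul
      (hg.comp_measurePreserving (hT.iterate _)))

theorem nullMeasurableSet_orbitLevelSet (hT : MeasurePreserving T μ μ) (a : ℕ → ℂ)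
    (p q : ℕ → ℤ) {f g : X → ℂ} (hf : AEStronglyMeasurable f μ) (hg : AEStronglyMeasurable g μ)
    (t : ℝ≥0∞) (N : ℕ) : NullMeasurableSet (orbitLevelSet a p q T f g t N) μ :=
  (MeasurableSet.const _).nullMeasurableSet.inter (nullMeasurableSet_lt aemeasurable_const
    (aestronglyMeasurable_orbitAvg hT a p q hf hg N).aemeasurable.nnnorm.coe_nnreal_ennreal)

open Classical in
theorem natCast_mul_measure_accumulate_orbitLevelSet_le (hT : MeasurePreserving T μ μ)
    (a : ℕ → ℂ) {p q : ℕ → ℤ} (hp : ∀ n, 0 ≤ p n) (hq : ∀ n, 0 ≤ q n) (t c : ℝ≥0∞) {J : ℕ}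
    (hshift : ∀ φ ψ : ℤ → ℂ, (Function.support φ).Finite → (Function.support ψ).Finite →
      t * ({j : ℤ | 1 ≤ j ∧ j ≤ J ∧ t < maximalAvg (shiftAvg a p q φ ψ) j}.ncard : ℕ) ≤
        c * l2NormZ φ * l2NormZ ψ)
    {f g : X → ℂ} (hf : AEStronglyMeasurable f μ) (hg : AEStronglyMeasurable g μ) {N₀ R : ℕ}
    (hR : ∀ n ∈ Icc 1 N₀, (p n).toNat ≤ R ∧ (q n).toNat ≤ R) :
    J * (t * μ (Set.accumulate (orbitLevelSet a p q T f g t) N₀)) ≤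
      (J + R) * (c * eLpNorm f 2 μ * eLpNorm g 2 μ) := by
  set E := Set.accumulate (orbitLevelSet a p q T f g t) N₀
  have hE : NullMeasurableSet E μ :=
    .iUnion fun N => .iUnion fun _ => nullMeasurableSet_orbitLevelSet hT a p q hf hg t N
  calc (J : ℝ≥0∞) * (t * μ E) = t * ∫⁻ x, (#{k ∈ Icc 1 J | T^[k] x ∈ E} : ℝ≥0∞) ∂μ := by
        rw [lintegral_card_filter_iterate_mem hT hE, Nat.card_Icc, Nat.add_sub_cancel]
        ring
    _ ≤ ∫⁻ x, t * (#{k ∈ Icc 1 J | T^[k] x ∈ E} : ℝ≥0∞) ∂μ := lintegral_const_mul_le _ _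
    _ ≤ ∫⁻ x, c * (l2NormZ (orbitWindow T f (J + R) x) * l2NormZ (orbitWindow T g (J + R) x)) ∂μ :=
        lintegral_mono fun x => by
          rw [← mul_assoc]
          refine le_trans ?_ (hshift _ _ (support_orbitWindow_finite T f _ x)
            (support_orbitWindow_finite T g _ x))
          gcongr
          exact_mod_cast card_filter_iterate_mem_le_ncard hp hq hR J x
    _ = c * ∫⁻ x, l2NormZ (orbitWindow T f (J + R) x) * l2NormZ (orbitWindow T g (J + R) x) ∂μ :=
        lintegral_const_mul'' c ((aemeasurable_l2NormZ_orbitWindow hT hf _).mul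
          (aemeasurable_l2NormZ_orbitWindow hT hg _))
    _ ≤ c * ((J + R : ℕ) * eLpNorm f 2 μ * eLpNorm g 2 μ) := by
        gcongr
        exact lintegral_l2NormZ_orbitWindow_mul_le hT hf hg _
    _ = (J + R) * (c * eLpNorm f 2 μ * eLpNorm g 2 μ) := by
        push_cast
        ring

theorem weakType_orbitAvg_of_weakType_shiftAvg (hT : MeasurePreserving T μ μ) (a : ℕ → ℂ)
    {p q : ℕ → ℤ} (hp : ∀ n, 0 ≤ p n) (hq : ∀ n, 0 ≤ q n) (t c : ℝ≥0∞)
    (hshift : ∀ φ ψ : ℤ → ℂ, (Function.support φ).Finite → (Function.support ψ).Finite →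
      ∀ J : ℕ, 2 ≤ J →
        t * ({j : ℤ | 1 ≤ j ∧ j ≤ J ∧ t < maximalAvg (shiftAvg a p q φ ψ) j}.ncard : ℕ) ≤
          c * l2NormZ φ * l2NormZ ψ)
    {f g : X → ℂ} (hf : AEStronglyMeasurable f μ) (hg : AEStronglyMeasurable g μ) :
    t * μ {x | t < maximalAvg (orbitAvg a p q T f g) x} ≤ c * eLpNorm f 2 μ * eLpNorm g 2 μ := by
  rw [setOf_lt_maximalAvg, measure_iUnion_eq_iSup_accumulate, ENNReal.mul_iSup]
  refine iSup_le fun N₀ => ?_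
  obtain ⟨R, hR⟩ : ∃ R : ℕ, ∀ n ∈ Icc 1 N₀, (p n).toNat ≤ R ∧ (q n).toNat ≤ R :=
    ⟨∑ n ∈ Icc 1 N₀, ((p n).toNat + (q n).toNat), fun n hn =>
      have h := single_le_sum (f := fun n => (p n).toNat + (q n).toNat) (by simp) hn
      ⟨by omega, by omega⟩⟩
  exact ENNReal.le_of_eventually_natCast_mul_le_add_mul R <| eventually_atTop.2 ⟨2, fun J hJ =>
    natCast_mul_measure_accumulate_orbitLevelSet_le hT a hp hq t c
      (fun φ ψ hφ hψ => hshift φ ψ hφ hψ J hJ) hf hg hR⟩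

end

theorem calderon_transference_weak_type_general
    {X : Type*} [MeasurableSpace X] (μ : Measure X)
    (T : X ≃ᵐ X) (hT : MeasurePreserving (⇑T) μ μ)
    (a : ℕ → ℂ) (P Q : Polynomial ℤ)
    (hPnat : ∀ n : ℕ, 0 ≤ P.eval (n : ℤ)) (hQnat : ∀ n : ℕ, 0 ≤ Q.eval (n : ℤ))
    (C : ℝ)
    (hyp : ∀ φ ψ : ℤ → ℂ, (Function.support φ).Finite → (Function.support ψ).Finite →
      ∀ lam : ℝ, 0 < lam → ∀ J : ℕ, 2 ≤ J →
      ENNReal.ofReal lam *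
          (Set.ncard {j : ℤ | 1 ≤ j ∧ j ≤ (J : ℤ) ∧
            ENNReal.ofReal lam < ⨆ N : ℕ, ⨆ _ : 1 ≤ N,
              (‖(1 / (N : ℂ)) * ∑ n ∈ Finset.Icc 1 N,
                  a n * φ (j + P.eval (n : ℤ)) * ψ (j + Q.eval (n : ℤ))‖₊ : ℝ≥0∞)} : ℕ)
        ≤ ENNReal.ofReal C * l2NormZ φ * l2NormZ ψ)
    (f g : X → ℂ) (hf : MemLp f 2 μ) (hg : MemLp g 2 μ) :
    ∀ lam : ℝ, 0 < lam →
      ENNReal.ofReal lam *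
          μ {x : X | ENNReal.ofReal lam < ⨆ N : ℕ, ⨆ _ : 1 ≤ N,
              (‖(1 / (N : ℂ)) * ∑ n ∈ Finset.Icc 1 N,
                  a n * f ((⇑T)^[(P.eval (n : ℤ)).toNat] x)
                    * g ((⇑T)^[(Q.eval (n : ℤ)).toNat] x)‖₊ : ℝ≥0∞)}
        ≤ ENNReal.ofReal C * eLpNorm f 2 μ * eLpNorm g 2 μ := fun lam hlam =>
  weakType_orbitAvg_of_weakType_shiftAvg hT a (p := fun n => P.eval (n : ℤ))
    (q := fun n => Q.eval (n : ℤ)) hPnat hQnat _ _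
    (fun φ ψ hφ hψ J hJ => hyp φ ψ hφ hψ lam hlam J hJ) hf.1 hg.1

/-- Calderón transference principle, weak type: a weak type `(2,2)` bound for the
bilinear maximal function of the weighted averages along polynomials `P, Q` on the
integers transfers to any dynamical system. -/
theorem calderon_transference_weak_type
    {X : Type*} [MeasurableSpace X] (μ : Measure X) [IsProbabilityMeasure μ]
    (T : X ≃ᵐ X) (hT : MeasurePreserving (⇑T) μ μ)
    (a : ℕ → ℂ) (P Q : Polynomial ℤ)
    (hP : 0 < P.natDegree) (hQ : 0 < Q.natDegree)
    (hPnat : ∀ n : ℕ, 0 ≤ P.eval (n : ℤ)) (hQnat : ∀ n : ℕ, 0 ≤ Q.eval (n : ℤ))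
    (C : ℝ) (hC : 0 < C)
    (hyp : ∀ φ ψ : ℤ → ℂ, (Function.support φ).Finite → (Function.support ψ).Finite →
      ∀ lam : ℝ, 0 < lam → ∀ J : ℕ, 2 ≤ J →
      ENNReal.ofReal lam *
          (Set.ncard {j : ℤ | 1 ≤ j ∧ j ≤ (J : ℤ) ∧
            ENNReal.ofReal lam < ⨆ N : ℕ, ⨆ _ : 1 ≤ N,
              (‖(1 / (N : ℂ)) * ∑ n ∈ Finset.Icc 1 N,
                  a n * φ (j + P.eval (n : ℤ)) * ψ (j + Q.eval (n : ℤ))‖₊ : ℝ≥0∞)} : ℕ)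
        ≤ ENNReal.ofReal C * l2NormZ φ * l2NormZ ψ)
    (f g : X → ℂ) (hf : MemLp f 2 μ) (hg : MemLp g 2 μ) :
    ∀ lam : ℝ, 0 < lam →
      ENNReal.ofReal lam *
          μ {x : X | ENNReal.ofReal lam < ⨆ N : ℕ, ⨆ _ : 1 ≤ N,
              (‖(1 / (N : ℂ)) * ∑ n ∈ Finset.Icc 1 N,
                  a n * f ((⇑T)^[(P.eval (n : ℤ)).toNat] x)
                    * g ((⇑T)^[(Q.eval (n : ℤ)).toNat] x)‖₊ : ℝ≥0∞)}
        ≤ ENNReal.ofReal C * eLpNorm f 2 μ * eLpNorm g 2 μ :=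
  calderon_transference_weak_type_general μ T hT a P Q hPnat hQnat C hyp f g hf hg
end

section
/- Let (X, 𝒜, μ) be a probability space, T : X → X an ergodic invertible measure-preserving transformation, and (a_n)_{n≥1} a sequence of complex numbers with |a_n| ≤ 1 for all n. Suppose that for all f₁, g₁ ∈ L^∞(X, μ) and μ-almost every x ∈ X, (1/N) ∑_{n=1}^{N} a_n f₁(T^{n} x) g₁(T^{−n} x) → 0 as N → ∞. Then for all f, g ∈ L²(X, μ) and μ-almost every x ∈ X, (1/N) ∑_{n=1}^{N} a_n f(T^{n} x) g(T^{−n} x) → 0 as N → ∞. -/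
open MeasureTheory Filter Finset Topology

/-!
Both `T` and `T⁻¹` are ergodic, so the maximal ergodic theorem yields, for every integrable
`h` and every `c > ∫ h`, that almost surely `N⁻¹ ∑_{n=1}^N h (Sⁿ x) ≤ c` for all large `N`
(`S = T, T⁻¹`). With Cauchy–Schwarz this bounds the bilinear averages of `(f, g)`
eventually by `‖f‖₂ ‖g‖₂` (up to any slack), almost surely. Hence the set of `f`, and likewise of
`g`, for which the averages tend to `0` almost surely is closed in `L²`. Bounded functions are
dense in `L²`: approximating first `f` and then `g` extends the hypothesis from `L^∞` to `L²`.
-/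

section MaximalErgodic

variable {X : Type*} {S : X → X} {f : X → ℝ}

/-- `birkhoffMax S f n x = max_{0 ≤ k ≤ n} birkhoffSum S f k x`, the running maximum of Garsia's
proof of the maximal ergodic theorem. -/
noncomputable def birkhoffMax (S : X → X) (f : X → ℝ) : ℕ → X → ℝ
  | 0 => 0
  | n + 1 => fun x => max 0 (f x + birkhoffMax S f n (S x))

theorem birkhoffMax_nonneg : ∀ n x, 0 ≤ birkhoffMax S f n x
  | 0, _ => le_rfl
  | _ + 1, _ => le_max_left _ _

theorem birkhoffSum_le_birkhoffMax : ∀ {k n : ℕ}, k ≤ n → ∀ x,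
    birkhoffSum S f k x ≤ birkhoffMax S f n x
  | 0, n, _, x => by simpa using birkhoffMax_nonneg n x
  | k + 1, n + 1, hkn, x => by
    rw [birkhoffSum_succ']
    exact le_max_of_le_right <|
      add_le_add_right (birkhoffSum_le_birkhoffMax (by omega) (S x)) _

theorem exists_birkhoffSum_eq_birkhoffMax : ∀ n x, ∃ k ≤ n,
    birkhoffSum S f k x = birkhoffMax S f n x
  | 0, x => ⟨0, le_rfl, birkhoffSum_zero _ _ _⟩
  | n + 1, x => by
    rcases le_total (f x + birkhoffMax S f n (S x)) 0 with hneg | hpos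
    · exact ⟨0, (n + 1).zero_le, by simp [birkhoffMax, hneg]⟩
    · obtain ⟨k, hk, hkx⟩ := exists_birkhoffSum_eq_birkhoffMax n (S x)
      exact ⟨k + 1, by omega, by simp [birkhoffMax, birkhoffSum_succ', hkx, hpos]⟩

theorem birkhoffMax_mono (x : X) : Monotone (birkhoffMax S f · x) := by
  refine monotone_nat_of_le_succ fun n => ?_
  obtain ⟨k, hk, hkx⟩ := exists_birkhoffSum_eq_birkhoffMax (S := S) (f := f) n x
  exact hkx ▸ birkhoffSum_le_birkhoffMax (by omega) x

theorem birkhoffMax_le_add_birkhoffMax_apply {n : ℕ} {x : X} (hx : 0 < birkhoffMax S f n x) :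
    birkhoffMax S f n x ≤ f x + birkhoffMax S f n (S x) := by
  obtain ⟨_ | k, hk, hkx⟩ := exists_birkhoffSum_eq_birkhoffMax (S := S) (f := f) n x
  · simp [← hkx] at hx
  · rw [← hkx, birkhoffSum_succ']
    exact add_le_add_right (birkhoffSum_le_birkhoffMax (by omega) (S x)) _

variable [MeasurableSpace X] {μ : Measure X}

theorem measurable_birkhoffMax (hS : Measurable S) (hf : Measurable f) :
    ∀ n, Measurable (birkhoffMax S f n)
  | 0 => measurable_const
  | n + 1 => measurable_const.max (hf.add ((measurable_birkhoffMax hS hf n).comp hS))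

theorem integrable_birkhoffMax (hS : MeasurePreserving S μ μ) (hf : Integrable f μ) :
    ∀ n, Integrable (birkhoffMax S f n) μ
  | 0 => integrable_zero _ _ _
  | n + 1 => (integrable_zero _ _ _).sup <| hf.add <|
      (hS.integrable_comp (integrable_birkhoffMax hS hf n).1).2 (integrable_birkhoffMax hS hf n)

theorem setIntegral_birkhoffMax_pos_nonneg (hS : MeasurePreserving S μ μ) (hfm : Measurable f)
    (hf : Integrable f μ) (n : ℕ) : 0 ≤ ∫ x in {x | 0 < birkhoffMax S f n x}, f x ∂μ := by
  set M := birkhoffMax S f n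
  have hM := integrable_birkhoffMax hS hf n
  have hMS : Integrable (M ∘ S) μ := (hS.integrable_comp hM.1).2 hM
  have hE : MeasurableSet {x | 0 < M x} :=
    measurableSet_lt measurable_const (measurable_birkhoffMax hS.measurable hfm n)
  have hMS_eq : ∫ x, M (S x) ∂μ = ∫ x, M x ∂μ := by
    rw [← integral_map hS.aemeasurable (hS.map_eq.symm ▸ hM.1), hS.map_eq]
  have hM_eq : ∫ x in {x | 0 < M x}, M x ∂μ = ∫ x, M x ∂μ :=
    setIntegral_eq_integral_of_forall_compl_eq_zero fun x hx =>
      le_antisymm (not_lt.1 hx) (birkhoffMax_nonneg n x)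
  -- Garsia: `M` vanishes off `{0 < M}`, `M ∘ S ≥ 0`, and `M - M ∘ S ≤ f` on `{0 < M}`.
  calc 0 = ∫ x in {x | 0 < M x}, M x ∂μ - ∫ x, M (S x) ∂μ := by rw [hM_eq, hMS_eq, sub_self]
    _ ≤ ∫ x in {x | 0 < M x}, M x ∂μ - ∫ x in {x | 0 < M x}, M (S x) ∂μ :=
      sub_le_sub_left
        (setIntegral_le_integral hMS (.of_forall fun x => birkhoffMax_nonneg n (S x))) _
    _ = ∫ x in {x | 0 < M x}, (M x - M (S x)) ∂μ :=
      (integral_sub hM.integrableOn hMS.integrableOn).symm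
    _ ≤ ∫ x in {x | 0 < M x}, f x ∂μ := by
      refine setIntegral_mono_on (hM.integrableOn.sub hMS.integrableOn) hf.integrableOn hE
        fun x hx => ?_
      linarith [birkhoffMax_le_add_birkhoffMax_apply (S := S) (f := f) hx]

theorem setIntegral_exists_birkhoffSum_pos_nonneg (hS : MeasurePreserving S μ μ)
    (hfm : Measurable f) (hf : Integrable f μ) :
    0 ≤ ∫ x in {x | ∃ k, 0 < birkhoffSum S f k x}, f x ∂μ := by
  have hunion : ⋃ n, {x | 0 < birkhoffMax S f n x} = {x | ∃ k, 0 < birkhoffSum S f k x} := by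
    ext x
    simp only [Set.mem_iUnion]
    constructor
    · rintro ⟨n, hn⟩
      obtain ⟨k, -, hkx⟩ := exists_birkhoffSum_eq_birkhoffMax (S := S) (f := f) n x
      exact ⟨k, hkx ▸ hn⟩
    · rintro ⟨k, hk⟩
      exact ⟨k, hk.trans_le (birkhoffSum_le_birkhoffMax le_rfl x)⟩
  have hlim := tendsto_setIntegral_of_monotone
    (fun n => measurableSet_lt measurable_const (measurable_birkhoffMax hS.measurable hfm n))
    (fun m n hmn x (hx : 0 < _) => hx.trans_le (birkhoffMax_mono x hmn)) hf.integrableOn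
  rw [hunion] at hlim
  exact ge_of_tendsto' hlim (setIntegral_birkhoffMax_pos_nonneg hS hfm hf)

end MaximalErgodic

section ErgodicUpperBound

theorem frequently_mul_add_lt_of_lt {u : ℕ → ℝ} {b b' C C' : ℝ} (hb : b < b')
    (hu : ∃ᶠ N in atTop, N * b' + C' < u N) : ∃ᶠ N in atTop, N * b + C < u N := by
  have hslack : ∀ᶠ N : ℕ in atTop, N * b + C ≤ N * b' + C' := by
    filter_upwards [tendsto_natCast_atTop_atTop.eventually_ge_atTop ((C - C') / (b' - b))]
      with N hN
    rw [div_le_iff₀ (sub_pos.2 hb)] at hN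
    linarith
  exact hu.mp (hslack.mono fun N h1 h2 => h1.trans_lt h2)

theorem sum_Icc_one_iterate_eq_birkhoffSum {X M : Type*} [AddCommMonoid M] (S : X → X)
    (h : X → M) (x : X) : ∀ N : ℕ, ∑ n ∈ Icc 1 N, h (S^[n] x) = birkhoffSum S h N (S x)
  | 0 => by simp
  | N + 1 => by
    rw [sum_Icc_succ_top (by omega), sum_Icc_one_iterate_eq_birkhoffSum S h x N, birkhoffSum_succ,
      Function.iterate_succ_apply]

variable {X : Type*} {S : X → X} {h : X → ℝ} {b b' : ℝ} {x : X}

theorem frequently_lt_birkhoffSum_apply (hb : b < b')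
    (hx : ∃ᶠ N in atTop, N * b' < birkhoffSum S h N x) :
    ∃ᶠ N in atTop, N * b < birkhoffSum S h N (S x) := by
  rw [← map_add_atTop_eq_nat 1, frequently_map] at hx
  have hshift : ∃ᶠ N in atTop, N * b' + (b' - h x) < birkhoffSum S h N (S x) :=
    hx.mono fun N hN => by
      rw [birkhoffSum_succ'] at hN
      push_cast at hN
      linarith
  exact (frequently_mul_add_lt_of_lt (C := 0) hb hshift).mono fun N hN => by linarith

theorem frequently_lt_birkhoffSum_of_apply (hb : b < b')
    (hx : ∃ᶠ N in atTop, N * b' < birkhoffSum S h N (S x)) :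
    ∃ᶠ N in atTop, N * b < birkhoffSum S h N x := by
  rw [← map_add_atTop_eq_nat 1, frequently_map]
  refine frequently_mul_add_lt_of_lt (C' := 0) (C := b - h x) hb (hx.mono fun N hN => by linarith)
    |>.mono fun N hN => ?_
  rw [birkhoffSum_succ']
  push_cast
  linarith

variable [MeasurableSpace X] {μ : Measure X} [IsProbabilityMeasure μ]

theorem le_integral_of_ae_exists_mul_lt_birkhoffSum (hS : MeasurePreserving S μ μ)
    (hm : Measurable h) (hi : Integrable h μ) {q : ℝ}
    (hq : ∀ᵐ x ∂μ, ∃ N : ℕ, N * q < birkhoffSum S h N x) : q ≤ ∫ x, h x ∂μ := by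
  have hpos : ∀ᵐ x ∂μ, x ∈ {x | ∃ k, 0 < birkhoffSum S (h - fun _ => q) k x} := by
    filter_upwards [hq] with x ⟨N, hN⟩
    refine ⟨N, ?_⟩
    rw [birkhoffSum_sub, birkhoffSum_of_comp_eq (φ := fun _ : X => q) rfl, Pi.smul_apply,
      nsmul_eq_mul]
    linarith
  have := setIntegral_exists_birkhoffSum_pos_nonneg hS (hm.sub measurable_const)
    (hi.sub (integrable_const q))
  rw [Measure.restrict_eq_self_of_ae_mem hpos, integral_sub' hi (integrable_const _),
    integral_const] at this
  simpa only [probReal_univ, smul_eq_mul, one_mul, sub_nonneg] using this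

theorem Ergodic.ae_eventually_birkhoffSum_le_of_measurable (hS : Ergodic S μ)
    (hm : Measurable h) (hi : Integrable h μ) {c : ℝ} (hc : ∫ x, h x ∂μ < c) :
    ∀ᵐ x ∂μ, ∀ᶠ N in atTop, birkhoffSum S h N x ≤ N * c := by
  -- Shifting an orbit by one step changes its Birkhoff sums by a bounded amount, so `G` is
  -- invariant once all rational slopes below `c` are taken at once.
  set G := {x | ∀ q : ℚ, (q : ℝ) < c → ∃ᶠ N in atTop, N * (q : ℝ) < birkhoffSum S h N x}
  have hGm : MeasurableSet G := by
    have hsum : ∀ N, Measurable (birkhoffSum S h N) := fun N =>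
      Finset.measurable_sum _ fun k _ => hm.comp (hS.measurable.iterate k)
    simp only [G, Set.ofPred_forall, frequently_atTop, Set.ofPred_exists, Set.ofPred_and]
    exact .iInter fun q => .iInter fun _ => .iInter fun M => .iUnion fun N =>
      (MeasurableSet.const _).inter (measurableSet_lt measurable_const (hsum N))
  have hGinv : S ⁻¹' G = G := by
    ext x
    refine ⟨fun hx q hq => ?_, fun hx q hq => ?_⟩ <;>
      obtain ⟨q', hqq', hq'c⟩ := exists_rat_btwn hq
    · exact frequently_lt_birkhoffSum_of_apply (by exact_mod_cast hqq') (hx q' hq'c)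
    · exact frequently_lt_birkhoffSum_apply (by exact_mod_cast hqq') (hx q' hq'c)
  rcases hS.ae_mem_or_ae_notMem hGm hGinv with hG | hG
  · obtain ⟨q, hhq, hqc⟩ := exists_rat_btwn hc
    refine absurd (le_integral_of_ae_exists_mul_lt_birkhoffSum hS.toMeasurePreserving hm hi ?_)
      hhq.not_ge
    filter_upwards [hG] with x hx using (hx q hqc).exists
  · filter_upwards [hG] with x hx
    simp only [G, Set.mem_ofPred, not_forall, not_frequently, not_lt] at hx
    obtain ⟨q, hqc, hq⟩ := hx
    exact hq.mono fun N hN => hN.trans (by gcongr)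

theorem Ergodic.ae_eventually_birkhoffSum_le (hS : Ergodic S μ) (hi : Integrable h μ) {c : ℝ}
    (hc : ∫ x, h x ∂μ < c) : ∀ᵐ x ∂μ, ∀ᶠ N in atTop, birkhoffSum S h N x ≤ N * c := by
  have hh := hi.1.ae_eq_mk
  have hsum : ∀ᵐ x ∂μ, ∀ N, birkhoffSum S h N x = birkhoffSum S (hi.1.mk h) N x :=
    ae_all_iff.2 fun N =>
      hS.toMeasurePreserving.quasiMeasurePreserving.birkhoffSum_ae_eq_of_ae_eq hh N
  filter_upwards [hS.ae_eventually_birkhoffSum_le_of_measurable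
    hi.1.stronglyMeasurable_mk.measurable (hi.congr hh) (integral_congr_ae hh ▸ hc), hsum]
    with x hx hxsum
  simpa only [hxsum] using hx

theorem Ergodic.ae_eventually_avg_Icc_le (hS : Ergodic S μ) (hi : Integrable h μ) {c : ℝ}
    (hc : ∫ x, h x ∂μ < c) :
    ∀ᵐ x ∂μ, ∀ᶠ N : ℕ in atTop, (N : ℝ)⁻¹ * ∑ n ∈ Icc 1 N, h (S^[n] x) ≤ c := by
  filter_upwards [hS.quasiMeasurePreserving.ae (hS.ae_eventually_birkhoffSum_le hi hc)] with x hx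
  filter_upwards [hx, eventually_gt_atTop 0] with N hN hN0
  rw [sum_Icc_one_iterate_eq_birkhoffSum, inv_mul_le_iff₀ (by exact_mod_cast hN0)]
  exact hN

end ErgodicUpperBound

namespace MeasureTheory.MemLp

variable {X E : Type*} [MeasurableSpace X] {μ : Measure X} [NormedAddCommGroup E]

theorem ofReal_integral_norm_sq {u : X → E} (hu : MemLp u 2 μ) :
    ENNReal.ofReal (∫ x, ‖u x‖ ^ 2 ∂μ) = eLpNorm u 2 μ ^ 2 := by
  rw [ofReal_integral_eq_lintegral_ofReal (hu.integrable_norm_pow two_ne_zero)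
    (.of_forall fun x => by positivity)]
  have := eLpNorm_nnreal_pow_eq_lintegral (f := u) (μ := μ) (p := 2) two_ne_zero
  simp only [ENNReal.coe_ofNat, NNReal.coe_ofNat, ENNReal.rpow_two] at this
  rw [this]
  congr 1 with x
  rw [ENNReal.ofReal_pow (norm_nonneg _), ofReal_norm]

theorem exists_memLp_top_integral_norm_sub_sq_lt {f : X → E} (hf : MemLp f 2 μ) {δ : ℝ}
    (hδ : 0 < δ) : ∃ f₁ : X → E, MemLp f₁ ⊤ μ ∧ ∫ x, ‖f x - f₁ x‖ ^ 2 ∂μ < δ := by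
  obtain ⟨φ, hφ, hφ2⟩ := hf.exists_simpleFunc_eLpNorm_sub_lt ENNReal.ofNat_ne_top
    (ENNReal.ofReal_pos.2 (Real.sqrt_pos.2 hδ)).ne'
  refine ⟨φ, φ.memLp_top μ, ?_⟩
  rw [← ENNReal.ofReal_lt_ofReal_iff hδ]
  change ENNReal.ofReal (∫ x, ‖(f - ⇑φ) x‖ ^ 2 ∂μ) < _
  rw [(hf.sub hφ2).ofReal_integral_norm_sq]
  calc eLpNorm (f - ⇑φ) 2 μ ^ 2 < ENNReal.ofReal √δ ^ 2 := ENNReal.pow_lt_pow_left two_ne_zero hφ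
    _ = ENNReal.ofReal δ := by rw [← ENNReal.ofReal_pow (Real.sqrt_nonneg δ), Real.sq_sqrt hδ.le]

end MeasureTheory.MemLp

section BilinearAverage

variable {X : Type*} {S R : X → X} {a : ℕ → ℂ} {f f' g : X → ℂ}

noncomputable def bilinearAvg (S R : X → X) (a : ℕ → ℂ) (f g : X → ℂ) (N : ℕ) (x : X) : ℂ :=
  (1 / (N : ℂ)) * ∑ n ∈ Icc 1 N, a n * f (S^[n] x) * g (R^[n] x)

theorem bilinearAvg_comm : bilinearAvg S R a f g = bilinearAvg R S a g f := by
  ext N x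
  simp only [bilinearAvg, mul_right_comm _ (f _)]

theorem bilinearAvg_add_left (N : ℕ) (x : X) :
    bilinearAvg S R a (f + f') g N x = bilinearAvg S R a f g N x + bilinearAvg S R a f' g N x := by
  simp only [bilinearAvg, ← mul_add, ← sum_add_distrib, Pi.add_apply]
  congr 1
  exact sum_congr rfl fun n _ => by ring

theorem norm_bilinearAvg_sq_le (ha : ∀ n, ‖a n‖ ≤ 1) (N : ℕ) (x : X) :
    ‖bilinearAvg S R a f g N x‖ ^ 2 ≤
      ((N : ℝ)⁻¹ * ∑ n ∈ Icc 1 N, ‖f (S^[n] x)‖ ^ 2) *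
        ((N : ℝ)⁻¹ * ∑ n ∈ Icc 1 N, ‖g (R^[n] x)‖ ^ 2) := by
  have hsum : ‖∑ n ∈ Icc 1 N, a n * f (S^[n] x) * g (R^[n] x)‖ ≤
      ∑ n ∈ Icc 1 N, ‖f (S^[n] x)‖ * ‖g (R^[n] x)‖ := by
    refine (norm_sum_le _ _).trans (sum_le_sum fun n _ => ?_)
    rw [norm_mul, norm_mul]
    gcongr
    exact mul_le_of_le_one_left (norm_nonneg _) (ha n)
  calc ‖bilinearAvg S R a f g N x‖ ^ 2
      = (N : ℝ)⁻¹ ^ 2 * ‖∑ n ∈ Icc 1 N, a n * f (S^[n] x) * g (R^[n] x)‖ ^ 2 := by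
        simp [bilinearAvg, mul_pow]
    _ ≤ (N : ℝ)⁻¹ ^ 2 * (∑ n ∈ Icc 1 N, ‖f (S^[n] x)‖ * ‖g (R^[n] x)‖) ^ 2 := by gcongr
    _ ≤ (N : ℝ)⁻¹ ^ 2 * ((∑ n ∈ Icc 1 N, ‖f (S^[n] x)‖ ^ 2) * ∑ n ∈ Icc 1 N, ‖g (R^[n] x)‖ ^ 2) :=
        by gcongr; exact sum_mul_sq_le_sq_mul_sq _ _ _
    _ = _ := by ring

variable [MeasurableSpace X] {μ : Measure X} [IsProbabilityMeasure μ]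

theorem ae_eventually_norm_bilinearAvg_sq_le (hS : Ergodic S μ) (hR : Ergodic R μ)
    (ha : ∀ n, ‖a n‖ ≤ 1) (hf : MemLp f 2 μ) (hg : MemLp g 2 μ) {α β : ℝ}
    (hα : ∫ x, ‖f x‖ ^ 2 ∂μ < α) (hβ : ∫ x, ‖g x‖ ^ 2 ∂μ < β) :
    ∀ᵐ x ∂μ, ∀ᶠ N in atTop, ‖bilinearAvg S R a f g N x‖ ^ 2 ≤ α * β := by
  filter_upwards [hS.ae_eventually_avg_Icc_le (hf.integrable_norm_pow two_ne_zero) hα,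
    hR.ae_eventually_avg_Icc_le (hg.integrable_norm_pow two_ne_zero) hβ] with x hfx hgx
  filter_upwards [hfx, hgx] with N hfN hgN
  have hα₀ : 0 ≤ α := (integral_nonneg fun x => by positivity).trans hα.le
  exact (norm_bilinearAvg_sq_le ha N x).trans (mul_le_mul hfN hgN (by positivity) hα₀)

theorem ae_tendsto_bilinearAvg_of_approx_left (hS : Ergodic S μ) (hR : Ergodic R μ)
    (ha : ∀ n, ‖a n‖ ≤ 1) (hf : MemLp f 2 μ) (hg : MemLp g 2 μ)
    (happrox : ∀ δ > 0, ∃ f₁, MemLp f₁ 2 μ ∧ ∫ x, ‖f x - f₁ x‖ ^ 2 ∂μ < δ ∧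
      ∀ᵐ x ∂μ, Tendsto (bilinearAvg S R a f₁ g · x) atTop (𝓝 0)) :
    ∀ᵐ x ∂μ, Tendsto (bilinearAvg S R a f g · x) atTop (𝓝 0) := by
  choose F hF hfF hFg using fun k : ℕ => happrox (1 / (k + 1)) Nat.one_div_pos_of_nat
  set β := ∫ x, ‖g x‖ ^ 2 ∂μ + 1
  have hβ : 0 < β := by positivity
  have herr : ∀ᵐ x ∂μ, ∀ k : ℕ, ∀ᶠ N in atTop,
      ‖bilinearAvg S R a (f - F k) g N x‖ ^ 2 ≤ 1 / (k + 1) * β :=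
    ae_all_iff.2 fun k => ae_eventually_norm_bilinearAvg_sq_le hS hR ha (hf.sub (hF k)) hg
      (hfF k) (lt_add_one _)
  filter_upwards [herr, ae_all_iff.2 hFg] with x herr hFg
  refine Metric.tendsto_nhds.2 fun ε hε => ?_
  obtain ⟨k, hk⟩ := exists_nat_one_div_lt (show 0 < (ε / 2) ^ 2 / β by positivity)
  filter_upwards [herr k, Metric.tendsto_nhds.1 (hFg k) (ε / 2) (half_pos hε)] with N hN hFN
  have hsmall : ‖bilinearAvg S R a (f - F k) g N x‖ < ε / 2 := by
    refine (pow_lt_pow_iff_left₀ (norm_nonneg _) (half_pos hε).le two_ne_zero).1 ?_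
    calc _ ≤ 1 / (k + 1) * β := hN
      _ < (ε / 2) ^ 2 := (lt_div_iff₀ hβ).1 hk
  rw [dist_zero_right] at hFN ⊢
  rw [← add_sub_cancel (F k) f, bilinearAvg_add_left]
  calc _ ≤ _ := norm_add_le _ _
    _ < ε / 2 + ε / 2 := add_lt_add hFN hsmall
    _ = ε := add_halves ε

theorem ae_tendsto_bilinearAvg_of_approx_right (hS : Ergodic S μ) (hR : Ergodic R μ)
    (ha : ∀ n, ‖a n‖ ≤ 1) (hf : MemLp f 2 μ) (hg : MemLp g 2 μ)
    (happrox : ∀ δ > 0, ∃ g₁, MemLp g₁ 2 μ ∧ ∫ x, ‖g x - g₁ x‖ ^ 2 ∂μ < δ ∧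
      ∀ᵐ x ∂μ, Tendsto (bilinearAvg S R a f g₁ · x) atTop (𝓝 0)) :
    ∀ᵐ x ∂μ, Tendsto (bilinearAvg S R a f g · x) atTop (𝓝 0) := by
  simp only [bilinearAvg_comm (S := S)] at happrox ⊢
  exact ae_tendsto_bilinearAvg_of_approx_left hR hS ha hg hf happrox

end BilinearAverage

theorem bilinear_avg_tendsto_zero_of_Linfty_to_L2_general
    {X : Type*} [MeasurableSpace X] (μ : Measure X) [IsProbabilityMeasure μ]
    (T : X ≃ᵐ X) (hT : Ergodic (⇑T) μ)
    (a : ℕ → ℂ) (ha : ∀ n, ‖a n‖ ≤ 1)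
    (hyp : ∀ f₁ g₁ : X → ℂ, MemLp f₁ ⊤ μ → MemLp g₁ ⊤ μ →
      ∀ᵐ x ∂μ,
        Tendsto (fun N : ℕ => (1 / (N : ℂ)) * ∑ n ∈ Finset.Icc 1 N,
            a n * f₁ ((⇑T)^[n] x) * g₁ ((⇑T.symm)^[n] x)) atTop (nhds 0))
    (f g : X → ℂ) (hf : MemLp f 2 μ) (hg : MemLp g 2 μ) :
    ∀ᵐ x ∂μ,
      Tendsto (fun N : ℕ => (1 / (N : ℂ)) * ∑ n ∈ Finset.Icc 1 N,
          a n * f ((⇑T)^[n] x) * g ((⇑T.symm)^[n] x)) atTop (nhds 0) := by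
  have hL2 {u : X → ℂ} (hu : MemLp u ⊤ μ) : MemLp u 2 μ := hu.mono_exponent le_top
  have hbounded (g₁ : X → ℂ) (hg₁ : MemLp g₁ ⊤ μ) :
      ∀ᵐ x ∂μ, Tendsto (bilinearAvg T T.symm a f g₁ · x) atTop (𝓝 0) := by
    refine ae_tendsto_bilinearAvg_of_approx_left hT hT.symm ha hf (hL2 hg₁) fun δ hδ => ?_
    obtain ⟨f₁, hf₁, hff₁⟩ := hf.exists_memLp_top_integral_norm_sub_sq_lt hδ
    exact ⟨f₁, hL2 hf₁, hff₁, hyp f₁ g₁ hf₁ hg₁⟩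
  refine ae_tendsto_bilinearAvg_of_approx_right hT hT.symm ha hf hg fun δ hδ => ?_
  obtain ⟨g₁, hg₁, hgg₁⟩ := hg.exists_memLp_top_integral_norm_sub_sq_lt hδ
  exact ⟨g₁, hL2 hg₁, hgg₁, hbounded g₁ hg₁⟩

/-- `L²`-extension by density: if the weighted bilinear averages
`(1/N) ∑_{n=1}^N a_n f₁(Tⁿ x) g₁(T^{−n} x)` converge to `0` a.e. for all
`f₁, g₁ ∈ L^∞`, where `(a_n)` is 1-bounded and `T` is an ergodic invertible
measure-preserving transformation of a probability space, then they converge to `0`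
a.e. for all `f, g ∈ L²`. -/
theorem bilinear_avg_tendsto_zero_of_Linfty_to_L2
    {X : Type*} [MeasurableSpace X] (μ : Measure X) [IsProbabilityMeasure μ]
    (T : X ≃ᵐ X) (hT : Ergodic (⇑T) μ) (hTinv : MeasurePreserving (⇑T.symm) μ μ)
    (a : ℕ → ℂ) (ha : ∀ n, ‖a n‖ ≤ 1)
    (hyp : ∀ f₁ g₁ : X → ℂ, MemLp f₁ ⊤ μ → MemLp g₁ ⊤ μ →
      ∀ᵐ x ∂μ,
        Tendsto (fun N : ℕ => (1 / (N : ℂ)) * ∑ n ∈ Finset.Icc 1 N,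
            a n * f₁ ((⇑T)^[n] x) * g₁ ((⇑T.symm)^[n] x)) atTop (nhds 0))
    (f g : X → ℂ) (hf : MemLp f 2 μ) (hg : MemLp g 2 μ) :
    ∀ᵐ x ∂μ,
      Tendsto (fun N : ℕ => (1 / (N : ℂ)) * ∑ n ∈ Finset.Icc 1 N,
          a n * f ((⇑T)^[n] x) * g ((⇑T.symm)^[n] x)) atTop (nhds 0) :=
  bilinear_avg_tendsto_zero_of_Linfty_to_L2_general μ T hT a ha hyp f g hf hg
end
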